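/- Let G be a finite connected simple graph with n ≥ 1 vertices and k ≥ 1, and let G' be obtained from G by adding new vertices x, x', x_1, …, x_{n²}, joining x to every vertex of G' except x' and joining x' to every vertex of G' except x. Then every cocircuit of G' of size n² + n + k has x and x' in different shores, and its crossing set contains exactly one of the two edges incident with x_j for each j ∈ {1,…,n²}. -/
import Mathlib


open SimpleGraph

/-- The crossing set `δ(X,Y)` of a pair of vertex sets: the edges of `G` with one
endpoint in `X` and the other in `Y`. -/
def crossSet {V : Type*} (G : SimpleGraph V) (X Y : Set V) : Set (Sym2 V) :=
  {e | e ∈ G.edgeSet ∧ ∃ a ∈ X, ∃ b ∈ Y, e = s(a, b)}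

/-- `(X, Y)` is a cut: a partition of the vertex set into two nonempty shores. -/
def IsCutPair {V : Type*} (X Y : Set V) : Prop :=
  X.Nonempty ∧ Y.Nonempty ∧ X ∩ Y = ∅ ∧ X ∪ Y = Set.univ

/-- `(X, Y)` is a cocircuit: a cut such that no proper subset of its crossing set is
the crossing set of a cut. -/
def IsCocircuitPair {V : Type*} (G : SimpleGraph V) (X Y : Set V) : Prop :=
  IsCutPair X Y ∧ ∀ X' Y' : Set V, IsCutPair X' Y' → ¬ crossSet G X' Y' ⊂ crossSet G X Y

/-- The number of cocircuits of `G`; a cocircuit is an unordered pair of shores,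
represented as an element of `Sym2 (Set V)`. -/
noncomputable def numCocircuits {V : Type*} (G : SimpleGraph V) : ℕ :=
  Nat.card {p : Sym2 (Set V) // ∃ X Y : Set V, p = s(X, Y) ∧ IsCocircuitPair G X Y}

/-- The number of cocircuits of `G` of size `k`. -/
noncomputable def numCocircuitsOfSize {V : Type*} (G : SimpleGraph V) (k : ℕ) : ℕ :=
  Nat.card {p : Sym2 (Set V) // ∃ X Y : Set V,
    p = s(X, Y) ∧ IsCocircuitPair G X Y ∧ (crossSet G X Y).ncard = k}

/-- A convex two-colouring of `G`: both colour classes induce connected subgraphs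
(the empty induced subgraph counts as connected). -/
def ConvexTwoColouring {V : Type*} (G : SimpleGraph V) (f : V → Fin 2) : Prop :=
  (G.induce (f ⁻¹' {0})).Preconnected ∧ (G.induce (f ⁻¹' {1})).Preconnected

/-- Vertex set of the extended graph `G'`: the vertices of `G` together with the new
vertices `x, x'` and `x₁, …, x_{n²}`. -/
abbrev ExtV (V : Type*) (n : ℕ) : Type _ := V ⊕ (Fin 2 ⊕ Fin (n ^ 2))

/-- The new vertex `x`. -/
def extX {V : Type*} {n : ℕ} : ExtV V n := Sum.inr (Sum.inl 0)

/-- The new vertex `x'`. -/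
def extX' {V : Type*} {n : ℕ} : ExtV V n := Sum.inr (Sum.inl 1)

/-- The new vertex `x_j` for `j ∈ {1, …, n²}`. -/
def extAux {V : Type*} {n : ℕ} (j : Fin (n ^ 2)) : ExtV V n := Sum.inr (Sum.inr j)

/-- The extended graph `G'`: it keeps all edges of `G`, and in addition `x` is joined
to every other vertex except `x'`, and `x'` is joined to every other vertex except
`x`. -/
def extGraph {V : Type*} (G : SimpleGraph V) (n : ℕ) : SimpleGraph (ExtV V n) :=
  SimpleGraph.fromEdgeSet
    ((Sym2.map Sum.inl '' G.edgeSet) ∪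
      {d : Sym2 (ExtV V n) | ∃ w : ExtV V n, w ≠ extX ∧ w ≠ extX' ∧
        (d = s(extX, w) ∨ d = s(extX', w))})

lemma crossSet_comm {V : Type*} (G : SimpleGraph V) (X Y : Set V) :
    crossSet G X Y = crossSet G Y X := by
  ext e
  constructor <;> rintro ⟨he, a, ha, b, hb, rfl⟩ <;> exact ⟨he, b, hb, a, ha, Sym2.eq_swap⟩

lemma cross_pair_iff {V : Type*} {G : SimpleGraph V} {X Y : Set V} {u v : V}
    (hE : s(u, v) ∈ G.edgeSet) :
    s(u, v) ∈ crossSet G X Y ↔ (u ∈ X ∧ v ∈ Y) ∨ (v ∈ X ∧ u ∈ Y) := by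
  constructor
  · rintro ⟨-, a, ha, b, hb, heq⟩
    rw [Sym2.eq_iff] at heq
    rcases heq with ⟨rfl, rfl⟩ | ⟨rfl, rfl⟩
    · exact Or.inl ⟨ha, hb⟩
    · exact Or.inr ⟨ha, hb⟩
  · rintro (⟨h1, h2⟩ | ⟨h1, h2⟩)
    · exact ⟨hE, u, h1, v, h2, rfl⟩
    · exact ⟨hE, v, h1, u, h2, Sym2.eq_swap⟩

lemma edge_x_aux {V : Type*} (G : SimpleGraph V) {n : ℕ} (j : Fin (n ^ 2)) :
    s(extX (V := V) (n := n), extAux j) ∈ (extGraph G n).edgeSet := by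
  rw [extGraph, edgeSet_fromEdgeSet]
  refine ⟨Or.inr ⟨extAux j, by simp [extAux, extX], by simp [extAux, extX'], Or.inl rfl⟩, ?_⟩
  simp [extX, extAux]

lemma edge_x'_aux {V : Type*} (G : SimpleGraph V) {n : ℕ} (j : Fin (n ^ 2)) :
    s(extX' (V := V) (n := n), extAux j) ∈ (extGraph G n).edgeSet := by
  rw [extGraph, edgeSet_fromEdgeSet]
  refine ⟨Or.inr ⟨extAux j, by simp [extAux, extX], by simp [extAux, extX'], Or.inr rfl⟩, ?_⟩
  simp [extX', extAux]

lemma aux_incident {V : Type*} (G : SimpleGraph V) {n : ℕ} {j : Fin (n ^ 2)} {a : ExtV V n}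
    (h : s(a, extAux j) ∈ (extGraph G n).edgeSet) :
    s(a, extAux j) = s(extX, extAux j) ∨ s(a, extAux j) = s(extX', extAux j) := by
  rw [extGraph, edgeSet_fromEdgeSet] at h
  obtain ⟨h1 | h2, -⟩ := h
  · obtain ⟨e, he, heq⟩ := h1
    induction e with
    | _ u v =>
      rw [Sym2.map_pair_eq, Sym2.eq_iff] at heq
      rcases heq with ⟨-, h⟩ | ⟨h, -⟩ <;> simp [extAux] at h
  · obtain ⟨w, hw1, hw2, hd | hd⟩ := h2 <;> rw [Sym2.eq_iff] at hd
    · rcases hd with ⟨rfl, rfl⟩ | ⟨rfl, h⟩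
      · exact Or.inl rfl
      · simp [extAux, extX] at h
    · rcases hd with ⟨rfl, rfl⟩ | ⟨rfl, h⟩
      · exact Or.inr rfl
      · simp [extAux, extX'] at h

lemma inl_incident {V : Type*} (G : SimpleGraph V) {n : ℕ} {v : V} {a : ExtV V n}
    (h : s(a, Sum.inl v) ∈ (extGraph G n).edgeSet) :
    a = extX ∨ a = extX' ∨ ∃ v' : V, a = Sum.inl v' ∧ v' ≠ v := by
  rw [extGraph, edgeSet_fromEdgeSet] at h
  obtain ⟨h1 | h2, -⟩ := h
  · obtain ⟨e, he, heq⟩ := h1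
    induction e with
    | _ u w =>
      have hadj : G.Adj u w := he
      rw [Sym2.map_pair_eq, Sym2.eq_iff] at heq
      rcases heq with ⟨rfl, h⟩ | ⟨h, rfl⟩
      · obtain rfl : w = v := by injection h
        exact Or.inr (Or.inr ⟨u, rfl, hadj.ne⟩)
      · obtain rfl : u = v := by injection h
        exact Or.inr (Or.inr ⟨w, rfl, hadj.ne'⟩)
  · obtain ⟨w, hw1, hw2, hd | hd⟩ := h2 <;> rw [Sym2.eq_iff] at hd
    · rcases hd with ⟨rfl, rfl⟩ | ⟨rfl, h⟩
      · exact Or.inl rfl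
      · simp [extX] at h
    · rcases hd with ⟨rfl, rfl⟩ | ⟨rfl, h⟩
      · exact Or.inr (Or.inl rfl)
      · simp [extX'] at h

lemma not_same_shore {V : Type*} [Fintype V] (G : SimpleGraph V) {n k : ℕ}
    (hn : Fintype.card V = n) (hn1 : 1 ≤ n) (hk : 1 ≤ k) {X Y : Set (ExtV V n)}
    (hC : IsCocircuitPair (extGraph G n) X Y)
    (hsize : (crossSet (extGraph G n) X Y).ncard = n ^ 2 + n + k)
    (hx : extX ∈ X) (hx' : extX' ∈ X) : False := by
  obtain ⟨⟨hXne, hYne, hdisj, hunion⟩, hmin⟩ := hC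
  by_cases hj : ∃ j : Fin (n ^ 2), extAux j ∈ Y
  · obtain ⟨j, hjY⟩ := hj
    refine hmin {extAux j}ᶜ {extAux j}
      ⟨⟨extX, by simp [extX, extAux]⟩, ⟨_, rfl⟩, Set.compl_inter_self _, Set.compl_union_self _⟩ ?_
    have hsub : crossSet (extGraph G n) {extAux j}ᶜ {extAux j} ⊆
        {s(extX, extAux j), s(extX', extAux j)} := by
      rintro e ⟨he, a, ha, b, hb, rfl⟩
      obtain rfl : b = extAux j := hb
      exact aux_incident G he
    constructor
    · intro e he'
      rcases hsub he' with rfl | rfl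
      · exact ⟨edge_x_aux G j, extX, hx, extAux j, hjY, rfl⟩
      · exact ⟨edge_x'_aux G j, extX', hx', extAux j, hjY, rfl⟩
    · intro heq
      have h2 : (crossSet (extGraph G n) X Y).ncard ≤ 2 := by
        calc (crossSet (extGraph G n) X Y).ncard
            ≤ ({s(extX, extAux j), s(extX', extAux j)} : Set (Sym2 (ExtV V n))).ncard :=
              Set.ncard_le_ncard (heq.trans hsub) (Set.toFinite _)
          _ ≤ 2 := (Set.ncard_insert_le _ _).trans (by simp)
      rw [hsize] at h2
      nlinarith
  · push_neg at hj
    have hYsub : Y ⊆ Set.range (Sum.inl : V → ExtV V n) := by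
      rintro y hy
      match y with
      | Sum.inl v => exact ⟨v, rfl⟩
      | Sum.inr (Sum.inl i) =>
        exfalso
        fin_cases i
        · exact absurd (Set.mem_inter hx hy) (by simp [extX, hdisj])
        · exact absurd (Set.mem_inter hx' hy) (by simp [extX', hdisj])
      | Sum.inr (Sum.inr j) => exact absurd hy (hj j)
    set g : V × (Fin 2 ⊕ V) → Sym2 (ExtV V n) := fun p =>
      Sum.elim (fun i => s((Sum.inl p.1 : ExtV V n), Sum.inr (Sum.inl i)))
        (fun v' => s((Sum.inl p.1 : ExtV V n), Sum.inl v')) p.2 with hg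
    set T : Set (V × (Fin 2 ⊕ V)) := {p | p.2 ≠ Sum.inr p.1} with hT
    have hsubT : crossSet (extGraph G n) X Y ⊆ g '' T := by
      rintro e ⟨he, a, ha, b, hb, rfl⟩
      obtain ⟨v, rfl⟩ := hYsub hb
      rcases inl_incident G he with rfl | rfl | ⟨v', rfl, hne⟩
      · exact ⟨(v, Sum.inl 0), by simp [hT], by simp [hg, extX, Sym2.eq_swap]⟩
      · exact ⟨(v, Sum.inl 1), by simp [hT], by simp [hg, extX', Sym2.eq_swap]⟩
      · exact ⟨(v, Sum.inr v'), by simp [hT, hne], by simp [hg, Sym2.eq_swap]⟩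
    have h1 : (crossSet (extGraph G n) X Y).ncard ≤ (g '' T).ncard :=
      Set.ncard_le_ncard hsubT (Set.toFinite _)
    have h2 : (g '' T).ncard ≤ T.ncard := Set.ncard_image_le (Set.toFinite T)
    have h3 : T.ncard = n ^ 2 + n := by
      have hTeq : T = Set.univ \ Set.range (fun v : V => (v, (Sum.inr v : Fin 2 ⊕ V))) := by
        ext ⟨v, c⟩
        simp only [hT, Set.mem_setOf_eq, Set.mem_diff, Set.mem_univ, true_and,
          Set.mem_range, Prod.mk.injEq, not_exists, not_and]
        constructor
        · rintro h v' rfl heq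
          exact h (heq ▸ rfl)
        · rintro h heq
          exact h v rfl heq.symm
      have hrange : (Set.range (fun v : V => (v, (Sum.inr v : Fin 2 ⊕ V)))).ncard = n := by
        rw [← Set.image_univ, Set.ncard_image_of_injective _ (fun a b hab => (Prod.mk.injEq _ _ _ _ ▸ hab).1)]
        rw [Set.ncard_univ, Nat.card_eq_fintype_card, hn]
      rw [hTeq, Set.ncard_diff (Set.subset_univ _), hrange, Set.ncard_univ,
        Nat.card_eq_fintype_card]
      have : Fintype.card (V × (Fin 2 ⊕ V)) = n * (2 + n) := by
        simp [Fintype.card_prod, Fintype.card_sum, hn]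
      rw [this]
      have : n * (2 + n) = n ^ 2 + 2 * n := by ring
      omega
    omega

/-- Every cocircuit of `G'` of size `n² + n + k` has `x` and `x'` in different shores,
and its crossing set contains exactly one of the two edges incident with `x_j`, for
each `j ∈ {1, …, n²}`. -/
theorem stmt_9 {V : Type*} [Fintype V] (G : SimpleGraph V) (hG : G.Connected)
    (n : ℕ) (hn : Fintype.card V = n) (hn1 : 1 ≤ n) (k : ℕ) (hk : 1 ≤ k)
    (X Y : Set (ExtV V n)) (hC : IsCocircuitPair (extGraph G n) X Y)
    (hsize : (crossSet (extGraph G n) X Y).ncard = n ^ 2 + n + k) :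
    ((extX ∈ X ∧ extX' ∈ Y) ∨ (extX ∈ Y ∧ extX' ∈ X)) ∧
      ∀ j : Fin (n ^ 2),
        Xor' (s(extX, extAux j) ∈ crossSet (extGraph G n) X Y)
          (s(extX', extAux j) ∈ crossSet (extGraph G n) X Y) := by
  obtain ⟨⟨hXne, hYne, hdisj, hunion⟩, hmin⟩ := hC
  have hC : IsCocircuitPair (extGraph G n) X Y := ⟨⟨hXne, hYne, hdisj, hunion⟩, hmin⟩
  have hC' : IsCocircuitPair (extGraph G n) Y X := by
    refine ⟨⟨hYne, hXne, by rw [Set.inter_comm]; exact hdisj,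
      by rw [Set.union_comm]; exact hunion⟩, fun X' Y' h => ?_⟩
    rw [crossSet_comm _ Y X]
    exact hmin X' Y' h
  have hsize' : (crossSet (extGraph G n) Y X).ncard = n ^ 2 + n + k := by
    rw [crossSet_comm _ Y X]; exact hsize
  have hd : ∀ z, z ∈ X → z ∉ Y := fun z hzX hzY => by
    have : z ∈ X ∩ Y := ⟨hzX, hzY⟩
    rw [hdisj] at this
    exact this
  have hmemv : ∀ z : ExtV V n, z ∈ X ∨ z ∈ Y := fun z => by
    have : z ∈ X ∪ Y := hunion ▸ Set.mem_univ z
    exact this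
  have hmem : (extX ∈ X ∧ extX' ∈ Y) ∨ (extX ∈ Y ∧ extX' ∈ X) := by
    rcases hmemv extX with h1 | h1 <;> rcases hmemv extX' with h2 | h2
    · exact absurd (not_same_shore G hn hn1 hk hC hsize h1 h2) (fun h => h)
    · exact Or.inl ⟨h1, h2⟩
    · exact Or.inr ⟨h1, h2⟩
    · exact absurd (not_same_shore G hn hn1 hk hC' hsize' h1 h2) (fun h => h)
  refine ⟨hmem, fun j => ?_⟩
  have e1 := edge_x_aux G (V := V) j
  have e2 := edge_x'_aux G (V := V) j
  rw [Xor', cross_pair_iff e1, cross_pair_iff e2]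
  rcases hmem with ⟨h1, h2⟩ | ⟨h1, h2⟩ <;> rcases hmemv (extAux j) with h3 | h3
  · exact Or.inr ⟨Or.inr ⟨h3, h2⟩, by
      rintro (⟨hA, hB⟩ | ⟨hA, hB⟩)
      exacts [hd _ h3 hB, hd _ h1 hB]⟩
  · exact Or.inl ⟨Or.inl ⟨h1, h3⟩, by
      rintro (⟨hA, hB⟩ | ⟨hA, hB⟩)
      exacts [hd _ hA h2, hd _ hA h3]⟩
  · exact Or.inl ⟨Or.inr ⟨h3, h1⟩, by
      rintro (⟨hA, hB⟩ | ⟨hA, hB⟩)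
      exacts [hd _ h3 hB, hd _ h2 hB]⟩
  · exact Or.inr ⟨Or.inl ⟨h2, h3⟩, by
      rintro (⟨hA, hB⟩ | ⟨hA, hB⟩)
      exacts [hd _ hA h1, hd _ hA h3]⟩
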